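/- Let m ≥ 1, ℏ > 0, and let f, g : ℂ^m → ℂ be holomorphic functions such that the functions z ↦ f(z)·e^{−|z|²/(4ℏ)}, z ↦ g(z)·e^{−|z|²/(4ℏ)}, z ↦ (∂_{z_j} f)(z)·e^{−|z|²/(4ℏ)} and z ↦ (∂_{z_j}∂_{z_l} f)(z)·e^{−|z|²/(4ℏ)} are Schwartz on ℝ^{2m} for all j, l. Then for all 1 ≤ j, l ≤ m: ∫_{ℂ^m} (A_j A_l f)(z) · conj(g(z)) dμ_ℏ(z) = 0, where A_j f := ∂_{z_j} f − (1/(2ℏ)) z̄_j f. (Hence the orthogonal projection onto the holomorphic subspace annihilates the second-order potential of the complexified Hitchin connection, so the L²-connection agrees with the complexified Hitchin connection on holomorphic families.) -/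

import Mathlib

open Complex MeasureTheory

noncomputable section

/-- Wirtinger derivative `∂/∂z_j` of `f : ℂ^m → ℂ` at `z`, via the real Fréchet derivative. -/
def wder {m : ℕ} (j : Fin m) (f : (Fin m → ℂ) → ℂ) (z : Fin m → ℂ) : ℂ :=
  (1/2) * (fderiv ℝ f z (Pi.single j 1) - Complex.I * fderiv ℝ f z (Pi.single j Complex.I))

/-- A function on `ℂ^m` is holomorphic if it is complex-differentiable in each variable. -/
def HoloEach {m : ℕ} (f : (Fin m → ℂ) → ℂ) : Prop :=
  ∀ (z : Fin m → ℂ) (j : Fin m),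
    DifferentiableAt ℂ (fun w : ℂ => f (Function.update z j w)) (z j)

/-- The complex partial derivative `∂_{z_j} f` at `z`. -/
def cpder {m : ℕ} (j : Fin m) (f : (Fin m → ℂ) → ℂ) (z : Fin m → ℂ) : ℂ :=
  deriv (fun w : ℂ => f (Function.update z j w)) (z j)

/-- The `(1,0)`-covariant derivative `A_j f = ∂_{z_j} f − (1/(2ℏ)) z̄_j f` in the Gaussian frame. -/
def AopH (m : ℕ) (h : ℝ) (j : Fin m) (f : (Fin m → ℂ) → ℂ) : (Fin m → ℂ) → ℂ :=
  fun z => wder j f z - (1 / (2 * (h : ℂ))) * (starRingEnd ℂ) (z j) * f z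

/-- Schwartz-class functions on `ℂ^m ≅ ℝ^{2m}`. -/
def IsSchwartzC (m : ℕ) (f : (Fin m → ℂ) → ℂ) : Prop :=
  ContDiff ℝ (⊤ : ℕ∞) f ∧ ∀ k n : ℕ, ∃ C, ∀ z, ‖z‖^k * ‖iteratedFDeriv ℝ n f z‖ ≤ C

/-- The Gaussian weight `e^{−|z|²/(4ℏ)}`, the pointwise norm of the Gaussian frame. -/
def gaussHalf (m : ℕ) (h : ℝ) (z : Fin m → ℂ) : ℝ :=
  Real.exp (-(∑ j, Complex.normSq (z j)) / (4 * h))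

/-- The density of the Gaussian measure `μ_ℏ = (2πℏ)^{-m} e^{−|z|²/(2ℏ)} λ`. -/
def gaussDensity (m : ℕ) (h : ℝ) (z : Fin m → ℂ) : ℝ :=
  ((2 * Real.pi * h) ^ m)⁻¹ * Real.exp (-(∑ j, Complex.normSq (z j)) / (2 * h))

/-! ### Auxiliary lemmas -/

lemma LU_apply {m : ℕ} (j : Fin m) (c : ℂ) :
    (ContinuousLinearMap.pi (Pi.single j (ContinuousLinearMap.id ℝ ℂ) :
      ∀ _ : Fin m, ℂ →L[ℝ] ℂ)) c = Pi.single j c := by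
  ext k
  rcases eq_or_ne k j with rfl | hk
  · simp
  · simp [Pi.single_apply, hk]

lemma pderiv_single {m : ℕ} (f : (Fin m → ℂ) → ℂ) (z : Fin m → ℂ) (j : Fin m)
    (hd : DifferentiableAt ℝ f z)
    (hj : DifferentiableAt ℂ (fun w : ℂ => f (Function.update z j w)) (z j)) (c : ℂ) :
    fderiv ℝ f z (Pi.single j c) = c * cpder j f z := by
  have hU : HasFDerivAt (Function.update z j)
      (ContinuousLinearMap.pi (Pi.single j (ContinuousLinearMap.id ℝ ℂ))) (z j) :=
    hasFDerivAt_update z (z j)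
  have hz : Function.update z j (z j) = z := Function.update_eq_self j z
  have hcomp : HasFDerivAt (fun w : ℂ => f (Function.update z j w))
      ((fderiv ℝ f z).comp (ContinuousLinearMap.pi (Pi.single j (ContinuousLinearMap.id ℝ ℂ))))
      (z j) := by
    have hfz : HasFDerivAt f (fderiv ℝ f z) (Function.update z j (z j)) := by
      rw [hz]; exact hd.hasFDerivAt
    exact hfz.comp (z j) hU
  have hC : HasDerivAt (fun w : ℂ => f (Function.update z j w)) (cpder j f z) (z j) :=
    hj.hasDerivAt
  have hR : HasFDerivAt (fun w : ℂ => f (Function.update z j w))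
      ((ContinuousLinearMap.smulRight (1 : ℂ →L[ℂ] ℂ) (cpder j f z)).restrictScalars ℝ) (z j) :=
    hC.hasFDerivAt.restrictScalars ℝ
  have heq := hcomp.unique hR
  have := congrArg (fun (L : ℂ →L[ℝ] ℂ) => L c) heq
  rw [← LU_apply j c]
  simpa [smul_eq_mul, mul_comm] using this

lemma wder_eq_cpder {m : ℕ} (f : (Fin m → ℂ) → ℂ) (z : Fin m → ℂ) (j : Fin m)
    (hd : DifferentiableAt ℝ f z)
    (hj : DifferentiableAt ℂ (fun w : ℂ => f (Function.update z j w)) (z j)) :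
    wder j f z = cpder j f z := by
  unfold wder
  rw [pderiv_single f z j hd hj 1, pderiv_single f z j hd hj Complex.I]
  have h2 : Complex.I * (Complex.I * cpder j f z) = -cpder j f z := by
    rw [← mul_assoc, Complex.I_mul_I]; ring
  rw [h2]; ring

lemma wder_conj_eq_zero {m : ℕ} (g : (Fin m → ℂ) → ℂ) (z : Fin m → ℂ) (j : Fin m)
    (hd : DifferentiableAt ℝ g z)
    (hj : DifferentiableAt ℂ (fun w : ℂ => g (Function.update z j w)) (z j)) :
    wder j (fun z => (starRingEnd ℂ) (g z)) z = 0 := by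
  have hcg : ∀ c : ℂ, fderiv ℝ (fun z => (starRingEnd ℂ) (g z)) z (Pi.single j c)
      = (starRingEnd ℂ) (fderiv ℝ g z (Pi.single j c)) := by
    intro c
    have h1 : HasFDerivAt (fun z : Fin m → ℂ => (starRingEnd ℂ) (g z))
        ((Complex.conjCLE.toContinuousLinearMap).comp (fderiv ℝ g z)) z :=
      (Complex.conjCLE.toContinuousLinearMap.hasFDerivAt).comp z hd.hasFDerivAt
    rw [h1.fderiv]
    simp
  unfold wder
  rw [hcg, hcg, pderiv_single g z j hd hj 1, pderiv_single g z j hd hj Complex.I]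
  simp only [one_mul, map_mul, Complex.conj_I]
  ring_nf
  rw [Complex.I_sq]
  ring

lemma wder_mul {m : ℕ} (u v : (Fin m → ℂ) → ℂ) (z : Fin m → ℂ) (j : Fin m)
    (hu : DifferentiableAt ℝ u z) (hv : DifferentiableAt ℝ v z) :
    wder j (fun z => u z * v z) z = wder j u z * v z + u z * wder j v z := by
  unfold wder
  rw [fderiv_fun_mul hu hv]
  simp only [ContinuousLinearMap.add_apply, ContinuousLinearMap.smul_apply, smul_eq_mul]
  ring

/-! ### The Gaussian exponential -/

def NR (m : ℕ) (z : Fin m → ℂ) : ℝ := ∑ k, Complex.normSq (z k)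

def expE (m : ℕ) (h : ℝ) (z : Fin m → ℂ) : ℂ := ((Real.exp (-(NR m z)/(2*h)) : ℝ) : ℂ)

lemma normSq_eq_fun : Complex.normSq = fun w : ℂ => w.re * w.re + w.im * w.im := by
  funext w; exact Complex.normSq_apply w

lemma hasFDerivAt_normSq (w : ℂ) :
    HasFDerivAt Complex.normSq
      ((w.re • Complex.reCLM + w.re • Complex.reCLM) +
        (w.im • Complex.imCLM + w.im • Complex.imCLM)) w := by
  rw [normSq_eq_fun]
  exact ((Complex.reCLM.hasFDerivAt).mul (Complex.reCLM.hasFDerivAt)).add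
    ((Complex.imCLM.hasFDerivAt).mul (Complex.imCLM.hasFDerivAt))

lemma contDiff_normSq : ContDiff ℝ (⊤ : ℕ∞) Complex.normSq := by
  rw [normSq_eq_fun]
  exact (Complex.reCLM.contDiff.mul Complex.reCLM.contDiff).add
    (Complex.imCLM.contDiff.mul Complex.imCLM.contDiff)

lemma contDiff_NR (m : ℕ) : ContDiff ℝ (⊤ : ℕ∞) (NR m) := by
  unfold NR
  exact ContDiff.sum fun k _ => contDiff_normSq.comp (ContinuousLinearMap.proj k : (Fin m → ℂ) →L[ℝ] ℂ).contDiff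

lemma contDiff_expE (m : ℕ) (h : ℝ) : ContDiff ℝ (⊤ : ℕ∞) (expE m h) :=
  Complex.ofRealCLM.contDiff.comp
    (Real.contDiff_exp.comp (((contDiff_NR m).neg).div_const (2*h)))

def DNR (m : ℕ) (z : Fin m → ℂ) : (Fin m → ℂ) →L[ℝ] ℝ :=
  ∑ k, (((z k).re • Complex.reCLM + (z k).re • Complex.reCLM) +
        ((z k).im • Complex.imCLM + (z k).im • Complex.imCLM)).comp
      (ContinuousLinearMap.proj k)

lemma hasFDerivAt_NR (m : ℕ) (z : Fin m → ℂ) : HasFDerivAt (NR m) (DNR m z) z := by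
  unfold NR DNR
  refine HasFDerivAt.fun_sum fun k _ => ?_
  have hp : HasFDerivAt (fun z : Fin m → ℂ => z k)
      (ContinuousLinearMap.proj k : (Fin m → ℂ) →L[ℝ] ℂ) z :=
    (ContinuousLinearMap.proj k : (Fin m → ℂ) →L[ℝ] ℂ).hasFDerivAt
  exact (hasFDerivAt_normSq (z k)).comp z hp

lemma DNR_single (m : ℕ) (z : Fin m → ℂ) (j : Fin m) (c : ℂ) :
    DNR m z (Pi.single j c) = 2 * (z j).re * c.re + 2 * (z j).im * c.im := by
  unfold DNR
  rw [ContinuousLinearMap.sum_apply]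
  rw [Finset.sum_eq_single j]
  · simp; ring
  · intro k _ hk
    simp [Pi.single_apply, hk.symm]
  · simp

lemma wder_expE (m : ℕ) (h : ℝ) (hh : 0 < h) (z : Fin m → ℂ) (j : Fin m) :
    wder j (expE m h) z = -(1/(2*(h:ℂ))) * (starRingEnd ℂ) (z j) * expE m h z := by
  have hfun : expE m h = fun z => Complex.ofRealCLM (Real.exp ((-(2*h)⁻¹) * NR m z)) := by
    funext z
    unfold expE
    rw [Complex.ofRealCLM_apply]
    norm_cast
    congr 1
    rw [div_eq_mul_inv]; ring
  have h1 : HasFDerivAt (fun z : Fin m → ℂ => (-(2*h)⁻¹) * NR m z)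
      ((-(2*h)⁻¹) • DNR m z) z := (hasFDerivAt_NR m z).const_mul _
  have h2 := h1.exp
  have h3' := Complex.ofRealCLM.hasFDerivAt.comp z h2
  have h3 : HasFDerivAt (fun z : Fin m → ℂ => Complex.ofRealCLM (Real.exp ((-(2*h)⁻¹) * NR m z)))
      (Complex.ofRealCLM.comp (Real.exp ((-(2*h)⁻¹) * NR m z) • (-(2*h)⁻¹) • DNR m z)) z := h3'
  rw [hfun]
  unfold wder
  rw [h3.fderiv]
  have e1 : ((-(2*h)⁻¹) • DNR m z) (Pi.single j 1) = (-(2*h)⁻¹) * (2 * (z j).re) := by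
    rw [ContinuousLinearMap.smul_apply, DNR_single]
    simp [smul_eq_mul]
  have e2 : ((-(2*h)⁻¹) • DNR m z) (Pi.single j Complex.I) = (-(2*h)⁻¹) * (2 * (z j).im) := by
    rw [ContinuousLinearMap.smul_apply, DNR_single]
    simp [smul_eq_mul]
  simp only [ContinuousLinearMap.coe_comp', Function.comp_apply,
    ContinuousLinearMap.smul_apply, e1, e2, smul_eq_mul]
  have hw : (starRingEnd ℂ) (z j) = ((z j).re : ℂ) - ((z j).im : ℂ) * Complex.I := by
    simp [Complex.ext_iff]
  rw [hw]
  set E := Real.exp ((-(2*h)⁻¹) * NR m z)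
  set x := (z j).re
  set y := (z j).im
  have hh' : (h:ℂ) ≠ 0 := Complex.ofReal_ne_zero.mpr hh.ne'
  simp only [Complex.ofRealCLM_apply]
  push_cast
  field_simp
  ring

/-! ### Decay machinery -/

def DecaysR (m : ℕ) (u : (Fin m → ℂ) → ℝ) : Prop :=
  ∀ K : ℕ, ∃ C, ∀ z, (1 + ‖z‖)^K * u z ≤ C

namespace DecaysR

variable {m : ℕ} {u v : (Fin m → ℂ) → ℝ}

lemma mono (hv : DecaysR m v) (huv : ∀ z, u z ≤ v z) : DecaysR m u := by
  intro K
  obtain ⟨C, hC⟩ := hv K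
  exact ⟨C, fun z => le_trans (by
    have := huv z
    nlinarith [pow_nonneg (by positivity : (0:ℝ) ≤ 1 + ‖z‖) K]) (hC z)⟩

lemma add (hu : DecaysR m u) (hv : DecaysR m v) : DecaysR m (fun z => u z + v z) := by
  intro K
  obtain ⟨C, hC⟩ := hu K
  obtain ⟨D, hD⟩ := hv K
  exact ⟨C + D, fun z => by have := hC z; have := hD z; dsimp only; nlinarith⟩

lemma cmul (hu : DecaysR m u) {a : ℝ} (ha : 0 ≤ a) : DecaysR m (fun z => a * u z) := by
  intro K
  obtain ⟨C, hC⟩ := hu K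
  exact ⟨a * C, fun z => by
    have := hC z
    dsimp only
    have hp : (0:ℝ) ≤ (1 + ‖z‖)^K := by positivity
    calc (1 + ‖z‖)^K * (a * u z) = a * ((1 + ‖z‖)^K * u z) := by ring
    _ ≤ a * C := by nlinarith⟩

lemma shift (hu : DecaysR m u) : DecaysR m (fun z => (1 + ‖z‖) * u z) := by
  intro K
  obtain ⟨C, hC⟩ := hu (K+1)
  refine ⟨C, fun z => ?_⟩
  have := hC z
  calc (1 + ‖z‖)^K * ((1 + ‖z‖) * u z) = (1 + ‖z‖)^(K+1) * u z := by ring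
  _ ≤ C := this

lemma mul_bdd (hu : DecaysR m u) (hu0 : ∀ z, 0 ≤ u z) (hv : DecaysR m v)
    (hv0 : ∀ z, 0 ≤ v z) : DecaysR m (fun z => u z * v z) := by
  intro K
  obtain ⟨C, hC⟩ := hu K
  obtain ⟨B, hB⟩ := hv 0
  refine ⟨C * B, fun z => ?_⟩
  have h1 := hC z
  have h2 := hB z
  simp only [pow_zero, one_mul] at h2
  have hp : (0:ℝ) ≤ (1 + ‖z‖)^K := by positivity
  dsimp only
  calc (1 + ‖z‖)^K * (u z * v z) = ((1 + ‖z‖)^K * u z) * v z := by ring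
  _ ≤ C * B := by nlinarith [hu0 z, hv0 z, mul_nonneg hp (hu0 z)]

end DecaysR

lemma decaysR_of_schwartz_aux {m : ℕ} {u : (Fin m → ℂ) → ℂ} {n : ℕ}
    (hu : ∀ k : ℕ, ∃ C, ∀ z, ‖z‖^k * ‖iteratedFDeriv ℝ n u z‖ ≤ C) :
    DecaysR m (fun z => ‖iteratedFDeriv ℝ n u z‖) := by
  intro K
  obtain ⟨C0, hC0⟩ := hu 0
  obtain ⟨CK, hCK⟩ := hu K
  refine ⟨2^K * (C0 + CK), fun z => ?_⟩
  have h1 : (1 + ‖z‖)^K ≤ 2^K * (1 + ‖z‖^K) := by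
    rcases le_total ‖z‖ 1 with hz | hz
    · calc (1 + ‖z‖)^K ≤ 2^K := by
            apply pow_le_pow_left₀ (by positivity) (by linarith)
      _ ≤ 2^K * (1 + ‖z‖^K) := by
            have : (0:ℝ) ≤ ‖z‖^K := by positivity
            nlinarith [pow_pos (show (0:ℝ) < 2 by norm_num) K]
    · calc (1 + ‖z‖)^K ≤ (2*‖z‖)^K := by
            apply pow_le_pow_left₀ (by positivity) (by linarith)
      _ = 2^K * ‖z‖^K := mul_pow 2 _ K
      _ ≤ 2^K * (1 + ‖z‖^K) := by
            have : (0:ℝ) < 2^K := pow_pos (by norm_num) K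
            nlinarith
  have h0 := hC0 z
  simp only [pow_zero, one_mul] at h0
  have hK := hCK z
  have hnn : 0 ≤ ‖iteratedFDeriv ℝ n u z‖ := norm_nonneg _
  calc (1 + ‖z‖)^K * ‖iteratedFDeriv ℝ n u z‖
      ≤ 2^K * (1 + ‖z‖^K) * ‖iteratedFDeriv ℝ n u z‖ := by nlinarith
  _ = 2^K * (‖iteratedFDeriv ℝ n u z‖ + ‖z‖^K * ‖iteratedFDeriv ℝ n u z‖) := by ring
  _ ≤ 2^K * (C0 + CK) := by
      have : (0:ℝ) < 2^K := pow_pos (by norm_num) K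
      nlinarith

lemma decaysR_norm_of_schwartz {m : ℕ} {u : (Fin m → ℂ) → ℂ} (hu : IsSchwartzC m u) :
    DecaysR m (fun z => ‖u z‖) := by
  have := decaysR_of_schwartz_aux (n := 0) (fun k => hu.2 k 0)
  simpa only [norm_iteratedFDeriv_zero] using this

lemma decaysR_fderiv_of_schwartz {m : ℕ} {u : (Fin m → ℂ) → ℂ} (hu : IsSchwartzC m u)
    (v : Fin m → ℂ) : DecaysR m (fun z => ‖fderiv ℝ u z v‖) := by
  have hd := decaysR_of_schwartz_aux (n := 1) (fun k => hu.2 k 1)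
  have hb : ∀ z, ‖fderiv ℝ u z v‖ ≤ ‖v‖ * ‖iteratedFDeriv ℝ 1 u z‖ := by
    intro z
    have hx : fderiv ℝ u z v = iteratedFDeriv ℝ 1 u z (fun _ => v) := by
      rw [iteratedFDeriv_one_apply]
    rw [hx]
    calc ‖iteratedFDeriv ℝ 1 u z (fun _ => v)‖
        ≤ ‖iteratedFDeriv ℝ 1 u z‖ * ∏ _i : Fin 1, ‖v‖ :=
          (iteratedFDeriv ℝ 1 u z).le_opNorm _
    _ = ‖v‖ * ‖iteratedFDeriv ℝ 1 u z‖ := by simp [mul_comm]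
  exact (hd.cmul (norm_nonneg v)).mono hb

lemma integrable_of_decaysR {m : ℕ} {u : (Fin m → ℂ) → ℂ}
    (hd : DecaysR m (fun z => ‖u z‖)) (hc : AEStronglyMeasurable u (volume : Measure (Fin m → ℂ))) :
    Integrable u (volume : Measure (Fin m → ℂ)) := by
  obtain ⟨C, hC⟩ := hd (2*m+1)
  have hfin : (Module.finrank ℝ (Fin m → ℂ) : ℝ) < ((2*m+1 : ℕ) : ℝ) := by
    have hfr : Module.finrank ℝ (Fin m → ℂ) = 2*m := by
      simp [Module.finrank_pi_fintype, Complex.finrank_real_complex]; ring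
    rw [hfr]
    push_cast; linarith
  have hint := (integrable_one_add_norm (μ := (volume : Measure (Fin m → ℂ)))
    (r := ((2*m+1 : ℕ) : ℝ)) hfin).const_mul C
  apply Integrable.mono' hint hc
  filter_upwards with z
  have hpos : (0:ℝ) < (1 + ‖z‖) := by positivity
  rw [Real.rpow_neg hpos.le, Real.rpow_natCast]
  rw [← div_eq_mul_inv, le_div_iff₀ (by positivity)]
  calc ‖u z‖ * (1 + ‖z‖)^(2*m+1) = (1 + ‖z‖)^(2*m+1) * ‖u z‖ := by ring
  _ ≤ C := hC z

/-! ### The key integration lemma -/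

lemma integral_dir_deriv_eq_zero {m : ℕ} (F : (Fin m → ℂ) → ℂ)
    (hF : Differentiable ℝ F) (v : Fin m → ℂ)
    (hInt : Integrable F (volume : Measure (Fin m → ℂ)))
    (hInt' : Integrable (fun z => fderiv ℝ F z v) (volume : Measure (Fin m → ℂ))) :
    ∫ z : Fin m → ℂ, fderiv ℝ F z v = 0 := by
  have key := integral_bilinear_hasLineDerivAt_right_eq_neg_left_of_integrable
    (μ := (volume : Measure (Fin m → ℂ)))
    (f := F) (f' := fun z => fderiv ℝ F z v)
    (g := fun _ => (1:ℂ)) (g' := fun _ => (0:ℂ))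
    (B := ContinuousLinearMap.mul ℝ ℂ) (v := v)
    (by simpa using hInt') (by simp) (by simpa using hInt)
    (fun z _ => ((hF z).hasFDerivAt).hasLineDerivAt v)
    (fun z _ => by simpa using (hasFDerivAt_const (1:ℂ) z).hasLineDerivAt v)
  simp only [ContinuousLinearMap.mul_apply', mul_zero, mul_one, integral_zero] at key
  have := key.symm
  rw [neg_eq_zero] at this
  exact this

set_option maxHeartbeats 2000000 in
/-- The Gaussian integral of `A_j A_l f` against a holomorphic `g` vanishes: the orthogonal
projection onto the holomorphic subspace annihilates the second-order potential of the
complexified Hitchin connection. -/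
theorem statement10 (m : ℕ) (hm : 1 ≤ m) (h : ℝ) (hh : 0 < h)
    (f g : (Fin m → ℂ) → ℂ) (hf : HoloEach f) (hg : HoloEach g)
    (hfS : IsSchwartzC m (fun z => f z * (gaussHalf m h z : ℂ)))
    (hgS : IsSchwartzC m (fun z => g z * (gaussHalf m h z : ℂ)))
    (hf1 : ∀ j : Fin m, IsSchwartzC m (fun z => cpder j f z * (gaussHalf m h z : ℂ)))
    (hf2 : ∀ j l : Fin m,
      IsSchwartzC m (fun z => cpder j (cpder l f) z * (gaussHalf m h z : ℂ))) :
    ∀ j l : Fin m,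
      ∫ z : Fin m → ℂ,
        AopH m h j (AopH m h l f) z * (starRingEnd ℂ) (g z) * (gaussDensity m h z : ℂ) = 0 := by
  intro j l
  -- smoothness of the Gaussian weight and consequences
  have hgH_ne : ∀ z : Fin m → ℂ, ((gaussHalf m h z : ℝ) : ℂ) ≠ 0 := fun z => by
    simp [gaussHalf, Real.exp_ne_zero]
  have hgHc : ContDiff ℝ (⊤ : ℕ∞) (fun z : Fin m → ℂ => ((gaussHalf m h z : ℝ) : ℂ)) := by
    have hfun : (fun z : Fin m → ℂ => ((gaussHalf m h z : ℝ) : ℂ))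
        = fun z => Complex.ofRealCLM (Real.exp (-(NR m z)/(4*h))) := by
      funext z; simp [gaussHalf, NR]
    rw [hfun]
    exact Complex.ofRealCLM.contDiff.comp
      (Real.contDiff_exp.comp (((contDiff_NR m).neg).div_const (4*h)))
  have hginv : ContDiff ℝ (⊤ : ℕ∞) (fun z : Fin m → ℂ => ((Real.exp ((NR m z)/(4*h)) : ℝ) : ℂ)) := by
    have hfun : (fun z : Fin m → ℂ => ((Real.exp ((NR m z)/(4*h)) : ℝ) : ℂ))
        = fun z => Complex.ofRealCLM (Real.exp ((NR m z)/(4*h))) := by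
      funext z; simp
    rw [hfun]
    exact Complex.ofRealCLM.contDiff.comp
      (Real.contDiff_exp.comp ((contDiff_NR m).div_const (4*h)))
  have hcancel : ∀ z : Fin m → ℂ,
      ((gaussHalf m h z : ℝ) : ℂ) * ((Real.exp ((NR m z)/(4*h)) : ℝ) : ℂ) = 1 := by
    intro z
    unfold gaussHalf NR
    norm_cast
    rw [← Real.exp_add]
    have hzero : (-(∑ k, Complex.normSq (z k)))/(4*h) + (∑ k, Complex.normSq (z k))/(4*h) = 0 := by
      ring
    rw [hzero, Real.exp_zero]
  have hsm : ∀ (u : (Fin m → ℂ) → ℂ), ContDiff ℝ (⊤ : ℕ∞) (fun z => u z * (gaussHalf m h z : ℂ))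
      → ContDiff ℝ (⊤ : ℕ∞) u := by
    intro u hu
    have hmul := hu.mul hginv
    have heq : (fun z => (u z * (gaussHalf m h z : ℂ)) * ((Real.exp ((NR m z)/(4*h)) : ℝ) : ℂ))
        = u := by
      funext z
      rw [mul_assoc, hcancel z, mul_one]
    rwa [heq] at hmul
  have hfc : ContDiff ℝ (⊤ : ℕ∞) f := hsm f hfS.1
  have hgc : ContDiff ℝ (⊤ : ℕ∞) g := hsm g hgS.1
  have hRc : ContDiff ℝ (⊤ : ℕ∞) (cpder l f) := hsm _ (hf1 l).1
  -- the conjugate coordinate function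
  have hconjco : ∀ (z : Fin m → ℂ), HasFDerivAt (fun z : Fin m → ℂ => (starRingEnd ℂ) (z l))
      ((Complex.conjCLE.toContinuousLinearMap).comp
        (ContinuousLinearMap.proj l : (Fin m → ℂ) →L[ℝ] ℂ)) z := fun z =>
    (Complex.conjCLE.toContinuousLinearMap.hasFDerivAt).comp z
      (ContinuousLinearMap.proj l : (Fin m → ℂ) →L[ℝ] ℂ).hasFDerivAt
  have hconjco_smooth : ContDiff ℝ (⊤ : ℕ∞) (fun z : Fin m → ℂ => (starRingEnd ℂ) (z l)) :=
    Complex.conjCLE.toContinuousLinearMap.contDiff.comp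
      (ContinuousLinearMap.proj l : (Fin m → ℂ) →L[ℝ] ℂ).contDiff
  set c0 : ℂ := 1 / (2 * (h:ℂ)) with hc0
  have hAop : AopH m h l f = fun z => cpder l f z - c0 * (starRingEnd ℂ) (z l) * f z := by
    funext z
    show wder l f z - (1/(2*(h:ℂ))) * (starRingEnd ℂ) (z l) * f z = _
    rw [wder_eq_cpder f z l (hfc.differentiable (by simp) z) (hf z l)]
  have hAopc : ContDiff ℝ (⊤ : ℕ∞) (AopH m h l f) := by
    rw [hAop]
    exact hRc.sub ((contDiff_const.mul hconjco_smooth).mul hfc)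
  have hconjg_smooth : ContDiff ℝ (⊤ : ℕ∞) (fun z => (starRingEnd ℂ) (g z)) :=
    Complex.conjCLE.toContinuousLinearMap.contDiff.comp hgc
  -- F and its Wirtinger derivative
  set F : (Fin m → ℂ) → ℂ :=
    fun z => AopH m h l f z * expE m h z * (starRingEnd ℂ) (g z) with hFdef
  have hFc : ContDiff ℝ (⊤ : ℕ∞) F := (hAopc.mul (contDiff_expE m h)).mul hconjg_smooth
  have hwF : ∀ z, wder j F z
      = AopH m h j (AopH m h l f) z * expE m h z * (starRingEnd ℂ) (g z) := by
    intro z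
    have d1 : DifferentiableAt ℝ (AopH m h l f) z := (hAopc.differentiable (by simp)) z
    have d2 : DifferentiableAt ℝ (expE m h) z := ((contDiff_expE m h).differentiable (by simp)) z
    have d3 : DifferentiableAt ℝ (fun z => (starRingEnd ℂ) (g z)) z :=
      (hconjg_smooth.differentiable (by simp)) z
    have e0 : wder j F z
        = wder j (fun z => AopH m h l f z * expE m h z) z * (starRingEnd ℂ) (g z)
          + (AopH m h l f z * expE m h z) * wder j (fun z => (starRingEnd ℂ) (g z)) z :=
      wder_mul (fun z => AopH m h l f z * expE m h z) (fun z => (starRingEnd ℂ) (g z)) z j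
        (d1.mul d2) d3
    have e1 : wder j (fun z => AopH m h l f z * expE m h z) z
        = wder j (AopH m h l f) z * expE m h z + AopH m h l f z * wder j (expE m h) z :=
      wder_mul (AopH m h l f) (expE m h) z j d1 d2
    rw [e0, e1, wder_conj_eq_zero g z j ((hgc.differentiable (by simp)) z) (hg z j),
      wder_expE m h hh z j]
    show _ = (wder j (AopH m h l f) z - (1/(2*(h:ℂ))) * (starRingEnd ℂ) (z j)
        * AopH m h l f z) * expE m h z * (starRingEnd ℂ) (g z)
    ring
  -- Schwartz-type product form of F
  set P : (Fin m → ℂ) → ℂ := fun z => f z * (gaussHalf m h z : ℂ) with hPdef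
  set Q : (Fin m → ℂ) → ℂ := fun z => g z * (gaussHalf m h z : ℂ) with hQdef
  set R : (Fin m → ℂ) → ℂ := fun z => cpder l f z * (gaussHalf m h z : ℂ) with hRdef
  have hexp_gH : ∀ z, expE m h z = (gaussHalf m h z : ℂ) * (gaussHalf m h z : ℂ) := by
    intro z
    unfold expE gaussHalf NR
    rw [← Complex.ofReal_mul, ← Real.exp_add]
    norm_cast
    congr 1
    field_simp
    ring
  set G : (Fin m → ℂ) → ℂ :=
    fun z => (R z - c0 * (starRingEnd ℂ) (z l) * P z) * (starRingEnd ℂ) (Q z) with hGdef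
  have hFeqG : F = G := by
    funext z
    show AopH m h l f z * expE m h z * (starRingEnd ℂ) (g z)
        = (R z - c0 * (starRingEnd ℂ) (z l) * P z) * (starRingEnd ℂ) (Q z)
    rw [hexp_gH z]
    have : AopH m h l f z = cpder l f z - c0 * (starRingEnd ℂ) (z l) * f z := by
      rw [hAop]
    rw [this, hPdef, hQdef, hRdef]
    simp only [map_mul, Complex.conj_ofReal]
    ring
  have hGsmooth : ContDiff ℝ (⊤ : ℕ∞) G := hFeqG ▸ hFc
  have hGcont : Continuous G := hGsmooth.continuous
  have hc0nn : (0:ℝ) ≤ ‖c0‖ := norm_nonneg _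
  have dP := decaysR_norm_of_schwartz hfS
  have dQ := decaysR_norm_of_schwartz hgS
  have dR := decaysR_norm_of_schwartz (hf1 l)
  have hzl_bd : ∀ z : Fin m → ℂ, ‖z l‖ ≤ 1 + ‖z‖ := fun z =>
    le_trans (norm_le_pi_norm z l) (by linarith [norm_nonneg z])
  -- integrability of G
  have hGdecay : DecaysR m (fun z => ‖G z‖) := by
    refine DecaysR.mono ((dR.add ((dP.shift).cmul hc0nn)).mul_bdd (fun z => by positivity) dQ
      (fun z => norm_nonneg _)) (fun z => ?_)
    show ‖G z‖ ≤ (‖R z‖ + ‖c0‖ * ((1+‖z‖) * ‖P z‖)) * ‖Q z‖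
    have hGz : ‖G z‖ = ‖R z - c0 * (starRingEnd ℂ) (z l) * P z‖ * ‖Q z‖ := by
      have : G z = (R z - c0 * (starRingEnd ℂ) (z l) * P z) * (starRingEnd ℂ) (Q z) := rfl
      rw [this, norm_mul, RCLike.norm_conj]
    rw [hGz]
    apply mul_le_mul_of_nonneg_right _ (norm_nonneg _)
    have e1 : ‖c0 * (starRingEnd ℂ) (z l) * P z‖ = ‖c0‖ * ‖(starRingEnd ℂ) (z l)‖ * ‖P z‖ := by
      rw [norm_mul (c0 * (starRingEnd ℂ) (z l)), norm_mul c0]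
    have e2 : ‖(starRingEnd ℂ) (z l)‖ = ‖z l‖ := RCLike.norm_conj _
    have h3 := norm_sub_le (R z) (c0 * (starRingEnd ℂ) (z l) * P z)
    rw [e1, e2] at h3
    have h1 := hzl_bd z
    have h4 : ‖c0‖ * ‖z l‖ * ‖P z‖ ≤ ‖c0‖ * ((1 + ‖z‖) * ‖P z‖) := by
      nlinarith [mul_nonneg (norm_nonneg c0) (norm_nonneg (P z)), norm_nonneg (z l),
        norm_nonneg c0, norm_nonneg (P z)]
    linarith
  have hGint : Integrable G (volume : Measure (Fin m → ℂ)) :=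
    integrable_of_decaysR hGdecay hGcont.aestronglyMeasurable
  -- integrability of the directional derivatives of G
  have hder : ∀ v : Fin m → ℂ,
      Integrable (fun z => fderiv ℝ G z v) (volume : Measure (Fin m → ℂ)) := by
    intro v
    have hform : ∀ z, fderiv ℝ G z v
        = (R z - c0 * (starRingEnd ℂ) (z l) * P z) * (starRingEnd ℂ) (fderiv ℝ Q z v)
          + (starRingEnd ℂ) (Q z) * (fderiv ℝ R z v
            - ((c0 * (starRingEnd ℂ) (z l)) * fderiv ℝ P z v
                + P z * (c0 * (starRingEnd ℂ) (v l)))) := by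
      intro z
      have hP' : HasFDerivAt P (fderiv ℝ P z) z := ((hfS.1.differentiable (by simp)) z).hasFDerivAt
      have hQ' : HasFDerivAt Q (fderiv ℝ Q z) z := ((hgS.1.differentiable (by simp)) z).hasFDerivAt
      have hR' : HasFDerivAt R (fderiv ℝ R z) z :=
        (((hf1 l).1.differentiable (by simp)) z).hasFDerivAt
      have h1 : HasFDerivAt (fun z : Fin m → ℂ => c0 * (starRingEnd ℂ) (z l))
          (c0 • ((Complex.conjCLE.toContinuousLinearMap).comp
            (ContinuousLinearMap.proj l : (Fin m → ℂ) →L[ℝ] ℂ))) z := (hconjco z).const_mul c0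
      have h2 := h1.mul hP'
      have hA' := hR'.sub h2
      have hCQ : HasFDerivAt (fun z => (starRingEnd ℂ) (Q z))
          ((Complex.conjCLE.toContinuousLinearMap).comp (fderiv ℝ Q z)) z :=
        (Complex.conjCLE.toContinuousLinearMap.hasFDerivAt).comp z hQ'
      have hG' := hA'.mul hCQ
      have hfd : fderiv ℝ G z
          = (R z - c0 * (starRingEnd ℂ) (z l) * P z) •
              ((Complex.conjCLE.toContinuousLinearMap).comp (fderiv ℝ Q z))
            + (starRingEnd ℂ) (Q z) • (fderiv ℝ R z
              - ((c0 * (starRingEnd ℂ) (z l)) • fderiv ℝ P z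
                + P z • (c0 • ((Complex.conjCLE.toContinuousLinearMap).comp
                  (ContinuousLinearMap.proj l : (Fin m → ℂ) →L[ℝ] ℂ))))) := hG'.fderiv
      rw [hfd]
      simp only [ContinuousLinearMap.add_apply, ContinuousLinearMap.smul_apply,
        ContinuousLinearMap.coe_sub', Pi.sub_apply, ContinuousLinearMap.coe_comp',
        Function.comp_apply, ContinuousLinearMap.proj_apply, smul_eq_mul,
        ContinuousLinearEquiv.coe_coe, Complex.conjCLE_apply]
    have hbnd : ∀ z, ‖fderiv ℝ G z v‖
        ≤ (‖R z‖ + ‖c0‖ * ((1+‖z‖) * ‖P z‖)) * ‖fderiv ℝ Q z v‖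
          + (‖fderiv ℝ R z v‖ + (‖c0‖ * ((1+‖z‖) * ‖fderiv ℝ P z v‖)
              + (‖c0‖ * ‖v‖) * ‖P z‖)) * ‖Q z‖ := by
      intro z
      rw [hform z]
      have t1 : ‖(R z - c0 * (starRingEnd ℂ) (z l) * P z) * (starRingEnd ℂ) (fderiv ℝ Q z v)‖
          ≤ (‖R z‖ + ‖c0‖ * ((1+‖z‖) * ‖P z‖)) * ‖fderiv ℝ Q z v‖ := by
        rw [norm_mul (R z - c0 * (starRingEnd ℂ) (z l) * P z), RCLike.norm_conj]
        apply mul_le_mul_of_nonneg_right _ (norm_nonneg _)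
        have e1 : ‖c0 * (starRingEnd ℂ) (z l) * P z‖
            = ‖c0‖ * ‖(starRingEnd ℂ) (z l)‖ * ‖P z‖ := by
          rw [norm_mul (c0 * (starRingEnd ℂ) (z l)), norm_mul c0]
        have e2 : ‖(starRingEnd ℂ) (z l)‖ = ‖z l‖ := RCLike.norm_conj _
        have h3 := norm_sub_le (R z) (c0 * (starRingEnd ℂ) (z l) * P z)
        rw [e1, e2] at h3
        have h1 := hzl_bd z
        have h4 : ‖c0‖ * ‖z l‖ * ‖P z‖ ≤ ‖c0‖ * ((1 + ‖z‖) * ‖P z‖) := by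
          nlinarith [mul_nonneg (norm_nonneg c0) (norm_nonneg (P z)), norm_nonneg (z l),
            norm_nonneg c0, norm_nonneg (P z)]
        linarith
      have t2 : ‖(starRingEnd ℂ) (Q z) * (fderiv ℝ R z v
            - ((c0 * (starRingEnd ℂ) (z l)) * fderiv ℝ P z v
                + P z * (c0 * (starRingEnd ℂ) (v l))))‖
          ≤ (‖fderiv ℝ R z v‖ + (‖c0‖ * ((1+‖z‖) * ‖fderiv ℝ P z v‖)
              + (‖c0‖ * ‖v‖) * ‖P z‖)) * ‖Q z‖ := by
        rw [norm_mul ((starRingEnd ℂ) (Q z)), RCLike.norm_conj, mul_comm ‖Q z‖]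
        apply mul_le_mul_of_nonneg_right _ (norm_nonneg _)
        have h3 := norm_sub_le (fderiv ℝ R z v)
          ((c0 * (starRingEnd ℂ) (z l)) * fderiv ℝ P z v + P z * (c0 * (starRingEnd ℂ) (v l)))
        have h5 := norm_add_le ((c0 * (starRingEnd ℂ) (z l)) * fderiv ℝ P z v)
          (P z * (c0 * (starRingEnd ℂ) (v l)))
        have e1 : ‖(c0 * (starRingEnd ℂ) (z l)) * fderiv ℝ P z v‖
            = ‖c0‖ * ‖z l‖ * ‖fderiv ℝ P z v‖ := by
          rw [norm_mul (c0 * (starRingEnd ℂ) (z l)), norm_mul c0, RCLike.norm_conj]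
        have e2 : ‖P z * (c0 * (starRingEnd ℂ) (v l))‖ = ‖P z‖ * (‖c0‖ * ‖v l‖) := by
          rw [norm_mul (P z), norm_mul c0, RCLike.norm_conj]
        rw [e1, e2] at h5
        have h1 := hzl_bd z
        have h2 : ‖v l‖ ≤ ‖v‖ := norm_le_pi_norm v l
        have h6 : ‖c0‖ * ‖z l‖ * ‖fderiv ℝ P z v‖
            ≤ ‖c0‖ * ((1 + ‖z‖) * ‖fderiv ℝ P z v‖) := by
          nlinarith [mul_nonneg (norm_nonneg c0) (norm_nonneg (fderiv ℝ P z v)),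
            norm_nonneg (z l), norm_nonneg c0, norm_nonneg (fderiv ℝ P z v)]
        have h7 : ‖P z‖ * (‖c0‖ * ‖v l‖) ≤ (‖c0‖ * ‖v‖) * ‖P z‖ := by
          nlinarith [mul_nonneg (norm_nonneg c0) (norm_nonneg (P z)), norm_nonneg (v l),
            norm_nonneg c0, norm_nonneg (P z), norm_nonneg v]
        linarith
      refine le_trans (norm_add_le _ _) ?_
      exact add_le_add t1 t2
    have hcontd : Continuous (fun z => fderiv ℝ G z v) :=
      (hGsmooth.continuous_fderiv (by simp)).clm_apply continuous_const
    have dPv := decaysR_fderiv_of_schwartz hfS v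
    have dQv := decaysR_fderiv_of_schwartz hgS v
    have dRv := decaysR_fderiv_of_schwartz (hf1 l) v
    refine integrable_of_decaysR (DecaysR.mono ?_ hbnd) hcontd.aestronglyMeasurable
    exact ((dR.add ((dP.shift).cmul hc0nn)).mul_bdd (fun z => by positivity) dQv
        (fun z => norm_nonneg _)).add
      ((dRv.add (((dPv.shift).cmul hc0nn).add (dP.cmul
          (mul_nonneg hc0nn (norm_nonneg v))))).mul_bdd (fun z => by positivity) dQ
        (fun z => norm_nonneg _))
  -- put everything together
  have hGdiff : Differentiable ℝ G := hGsmooth.differentiable (by simp)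
  have hz1 : ∫ z : Fin m → ℂ, fderiv ℝ G z (Pi.single j 1) = 0 :=
    integral_dir_deriv_eq_zero G hGdiff _ hGint (hder _)
  have hz2 : ∫ z : Fin m → ℂ, fderiv ℝ G z (Pi.single j Complex.I) = 0 :=
    integral_dir_deriv_eq_zero G hGdiff _ hGint (hder _)
  have hintrep : (fun z : Fin m → ℂ =>
        AopH m h j (AopH m h l f) z * (starRingEnd ℂ) (g z) * (gaussDensity m h z : ℂ))
      = fun z => ((((2*Real.pi*h)^m)⁻¹ : ℝ) : ℂ) * wder j G z := by
    funext z
    rw [← hFeqG, hwF z]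
    unfold gaussDensity expE NR
    push_cast
    ring
  rw [hintrep]
  rw [integral_const_mul]
  have hsplit : (fun z : Fin m → ℂ => wder j G z)
      = fun z => (1/2 : ℂ) * (fderiv ℝ G z (Pi.single j 1)
          - Complex.I * fderiv ℝ G z (Pi.single j Complex.I)) := by
    funext z; rfl
  rw [hsplit, integral_const_mul]
  have hIi : Integrable (fun z => Complex.I * fderiv ℝ G z (Pi.single j Complex.I))
      (volume : Measure (Fin m → ℂ)) := (hder _).const_mul Complex.I
  rw [integral_sub (hder _) hIi, integral_const_mul, hz1, hz2]
  simp

end
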